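/- arXiv:2211.05494 — 3 statements merged into one kernel-verified Lean document; each statement's English description precedes it below -/
import Mathlib

section
/- Let V and W be finite-dimensional real inner product spaces, D : V → W a linear map, and Π = range(D). With β the inf-sup constant β = inf_{0≠q∈Π} sup_{0≠v∈V} ⟨Dv, q⟩/(‖v‖_V ‖q‖_W) and κ = inf_{0≠v∈ker(D)^⊥} ‖Dv‖²/‖v‖_V², one has √κ ≥ β/2. -/
open scoped RealInnerProductSpace

theorem stmt_2
    {V W : Type*} [NormedAddCommGroup V] [InnerProductSpace ℝ V] [FiniteDimensional ℝ V]
    [NormedAddCommGroup W] [InnerProductSpace ℝ W] [FiniteDimensional ℝ W]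
    (D : V →ₗ[ℝ] W)
    (β κ : ℝ)
    (hβ : β = sInf {r : ℝ | ∃ q ∈ LinearMap.range D, q ≠ 0 ∧
      r = sSup {s : ℝ | ∃ v : V, v ≠ 0 ∧ s = ⟪D v, q⟫ / (‖v‖ * ‖q‖)}})
    (hκ : κ = sInf {r : ℝ | ∃ v ∈ (LinearMap.ker D)ᗮ, v ≠ 0 ∧ r = ‖D v‖ ^ 2 / ‖v‖ ^ 2}) :
    Real.sqrt κ ≥ β / 2 := by
  subst hβ hκ
  set K : Submodule ℝ V := LinearMap.ker D with hKdef
  by_cases hP : ∃ v : V, v ∈ Kᗮ ∧ v ≠ 0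
  · obtain ⟨v₀, hv₀P, hv₀ne⟩ := hP
    have hnt : Nontrivial ↥(Kᗮ) :=
      ⟨⟨v₀, hv₀P⟩, 0, by simp [Submodule.mk_eq_zero, hv₀ne]⟩
    have hDcont : Continuous fun w : ↥(Kᗮ) => ‖D (w : V)‖ :=
      ((LinearMap.toContinuousLinearMap D).continuous.comp continuous_subtype_val).norm
    obtain ⟨u, huS, humin⟩ := (isCompact_sphere (0 : ↥(Kᗮ)) 1).exists_isMinOn
      (NormedSpace.sphere_nonempty.2 zero_le_one) hDcont.continuousOn
    have hu1 : ‖(u : V)‖ = 1 := by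
      simpa [Submodule.coe_norm] using (mem_sphere_zero_iff_norm.1 huS)
    set u' : V := (u : V) with hu'def
    have huP : u' ∈ Kᗮ := u.2
    set c : ℝ := ‖D u'‖ with hcdef
    -- c > 0
    have hcpos : 0 < c := by
      rw [hcdef, norm_pos_iff]
      intro hDu
      have huK : u' ∈ K := by rwa [hKdef, LinearMap.mem_ker]
      have : ⟪u', u'⟫ = 0 := (Submodule.mem_orthogonal K u').1 huP u' huK
      have hu0 : u' = 0 := inner_self_eq_zero.1 this
      rw [hu0] at hu1; simp at hu1
    -- minimality scaled
    have hmin : ∀ w : V, w ∈ Kᗮ → c * ‖w‖ ≤ ‖D w‖ := by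
      intro w hw
      rcases eq_or_ne w 0 with rfl | hwne
      · simp
      · have hwn : (0:ℝ) < ‖w‖ := norm_pos_iff.2 hwne
        have hmem : (⟨‖w‖⁻¹ • w, Submodule.smul_mem _ _ hw⟩ : ↥(Kᗮ)) ∈
            Metric.sphere (0 : ↥(Kᗮ)) 1 := by
          rw [mem_sphere_zero_iff_norm]
          simp [Submodule.coe_norm, norm_smul, abs_of_pos (inv_pos.2 hwn),
            inv_mul_cancel₀ hwn.ne']
        have := humin hmem
        simp only [Set.mem_setOf_eq] at this
        have h2 : ‖D u'‖ ≤ ‖D (‖w‖⁻¹ • w)‖ := this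
        rw [map_smul, norm_smul, norm_inv, norm_norm] at h2
        rw [← hcdef] at h2
        calc c * ‖w‖ ≤ (‖w‖⁻¹ * ‖D w‖) * ‖w‖ := by nlinarith
          _ = ‖D w‖ := by field_simp
    -- key pointwise bound
    have hkey : ∀ v : V, ⟪D v, D u'⟫ ≤ c ^ 2 * ‖v‖ := by
      intro v
      set p : V := (Submodule.orthogonalProjectionOnto Kᗮ v : V) with hpdef
      have hpP : p ∈ Kᗮ := (Submodule.orthogonalProjectionOnto Kᗮ v).2
      have hres : v - p ∈ Kᗮᗮ := Submodule.sub_starProjection_mem_orthogonal (K := Kᗮ) v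
      have hresK : v - p ∈ K := by rwa [Submodule.orthogonal_orthogonal] at hres
      have hDv : D v = D p := by
        have : D (v - p) = 0 := LinearMap.mem_ker.1 hresK
        rw [map_sub] at this
        linear_combination (norm := abel) this
      have hip : ⟪p, v - p⟫ = 0 :=
        Submodule.inner_right_of_mem_orthogonal hpP hres
      have hpn : ‖p‖ ≤ ‖v‖ := by
        have hexp : ‖v‖ ^ 2 = ‖p‖ ^ 2 + ‖v - p‖ ^ 2 := by
          have := norm_add_sq_real p (v - p)
          simp only [hip] at this
          have hvp : p + (v - p) = v := by abel
          rw [hvp] at this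
          linarith
        nlinarith [norm_nonneg p, norm_nonneg v, norm_nonneg (v - p)]
      -- quadratic form nonnegativity along p + t u'
      have hQ : ∀ t : ℝ, 0 ≤ (‖D p‖ ^ 2 - c ^ 2 * ‖p‖ ^ 2) +
          2 * t * (⟪D p, D u'⟫ - c ^ 2 * ⟪p, u'⟫) := by
        intro t
        have hmemt : p + t • u' ∈ Kᗮ := Submodule.add_mem _ hpP (Submodule.smul_mem _ _ huP)
        have h1 := hmin _ hmemt
        have h2 : c ^ 2 * ‖p + t • u'‖ ^ 2 ≤ ‖D (p + t • u')‖ ^ 2 := by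
          have hsq := mul_self_le_mul_self (by positivity) h1
          nlinarith
        have e1 : ‖p + t • u'‖ ^ 2 = ‖p‖ ^ 2 + 2 * (t * ⟪p, u'⟫) + t ^ 2 := by
          have h := norm_add_sq_real p (t • u')
          rw [real_inner_smul_right, norm_smul, Real.norm_eq_abs, mul_pow, sq_abs, hu1] at h
          rw [h]; ring
        have e2 : ‖D (p + t • u')‖ ^ 2 = ‖D p‖ ^ 2 + 2 * (t * ⟪D p, D u'⟫) + t ^ 2 * c ^ 2 := by
          rw [map_add, map_smul]
          have h := norm_add_sq_real (D p) (t • D u')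
          rw [real_inner_smul_right, norm_smul, Real.norm_eq_abs, mul_pow, sq_abs] at h
          rw [h, ← hcdef]
        rw [e1, e2] at h2
        nlinarith
      have hB : ⟪D p, D u'⟫ - c ^ 2 * ⟪p, u'⟫ ≤ 0 := by
        by_contra hB
        push_neg at hB
        set Qp : ℝ := ‖D p‖ ^ 2 - c ^ 2 * ‖p‖ ^ 2 with hQp
        set B : ℝ := ⟪D p, D u'⟫ - c ^ 2 * ⟪p, u'⟫ with hBdef
        have hQt := hQ (-(Qp + 1) / (2 * B))
        have hEq : 2 * (-(Qp + 1) / (2 * B)) * B = -(Qp + 1) := by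
          field_simp
        rw [hEq] at hQt
        linarith
      have hiu : ⟪p, u'⟫ ≤ ‖p‖ * ‖u'‖ := real_inner_le_norm p u'
      rw [hu1, mul_one] at hiu
      rw [hDv]
      have hc2 : (0:ℝ) ≤ c ^ 2 := sq_nonneg c
      nlinarith [mul_le_mul_of_nonneg_left hiu hc2, mul_le_mul_of_nonneg_left hpn hc2]
    -- bound each element of the sup set by c
    set T : Set ℝ := {s : ℝ | ∃ v : V, v ≠ 0 ∧ s = ⟪D v, D u'⟫ / (‖v‖ * ‖D u'‖)} with hTdef
    have hTle : ∀ s ∈ T, s ≤ c := by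
      rintro s ⟨v, hvne, rfl⟩
      have hvn : (0:ℝ) < ‖v‖ := norm_pos_iff.2 hvne
      rw [div_le_iff₀ (by positivity)]
      calc ⟪D v, D u'⟫ ≤ c ^ 2 * ‖v‖ := hkey v
        _ = c * (‖v‖ * ‖D u'‖) := by rw [← hcdef]; ring
    have hr₀le : sSup T ≤ c := Real.sSup_le hTle hcpos.le
    -- membership of sSup T in the β-set
    have hq0 : D u' ≠ 0 := by
      intro h; rw [hcdef, h] at hcpos; simp at hcpos
    have hmem : sSup T ∈ {r : ℝ | ∃ q ∈ LinearMap.range D, q ≠ 0 ∧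
        r = sSup {s : ℝ | ∃ v : V, v ≠ 0 ∧ s = ⟪D v, q⟫ / (‖v‖ * ‖q‖)}} :=
      ⟨D u', LinearMap.mem_range_self D u', hq0, rfl⟩
    -- the β-set is bounded below by 0
    have hu'ne : u' ≠ 0 := by
      intro h; rw [h] at hu1; simp at hu1
    have hbdd : ∀ r ∈ {r : ℝ | ∃ q ∈ LinearMap.range D, q ≠ 0 ∧
        r = sSup {s : ℝ | ∃ v : V, v ≠ 0 ∧ s = ⟪D v, q⟫ / (‖v‖ * ‖q‖)}}, (0:ℝ) ≤ r := by
      rintro r ⟨q, hq, hqne, rfl⟩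
      set Tq : Set ℝ := {s : ℝ | ∃ v : V, v ≠ 0 ∧ s = ⟪D v, q⟫ / (‖v‖ * ‖q‖)} with hTq
      by_cases hbA : BddAbove Tq
      · have h1 : ⟪D u', q⟫ / (‖u'‖ * ‖q‖) ∈ Tq := ⟨u', hu'ne, rfl⟩
        have h2 : -(⟪D u', q⟫ / (‖u'‖ * ‖q‖)) ∈ Tq := by
          refine ⟨-u', neg_ne_zero.2 hu'ne, ?_⟩
          rw [map_neg, inner_neg_left, norm_neg, neg_div]
        have l1 := le_csSup hbA h1
        have l2 := le_csSup hbA h2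
        linarith
      · rw [Real.sSup_of_not_bddAbove hbA]
    have hβle : sInf {r : ℝ | ∃ q ∈ LinearMap.range D, q ≠ 0 ∧
        r = sSup {s : ℝ | ∃ v : V, v ≠ 0 ∧ s = ⟪D v, q⟫ / (‖v‖ * ‖q‖)}} ≤ c :=
      le_trans (csInf_le ⟨0, hbdd⟩ hmem) hr₀le
    -- κ ≥ c²
    have hκge : c ^ 2 ≤ sInf {r : ℝ | ∃ v ∈ Kᗮ, v ≠ 0 ∧ r = ‖D v‖ ^ 2 / ‖v‖ ^ 2} := by
      apply le_csInf
      · exact ⟨‖D u'‖ ^ 2 / ‖u'‖ ^ 2, u', huP, hu'ne, rfl⟩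
      · rintro r ⟨v, hvP, hvne, rfl⟩
        have hvn : (0:ℝ) < ‖v‖ := norm_pos_iff.2 hvne
        rw [le_div_iff₀ (by positivity)]
        have hsq2 := mul_self_le_mul_self (by positivity) (hmin v hvP)
        nlinarith
    have hsq : c ≤ Real.sqrt (sInf {r : ℝ | ∃ v ∈ Kᗮ, v ≠ 0 ∧ r = ‖D v‖ ^ 2 / ‖v‖ ^ 2}) := by
      rw [← Real.sqrt_sq hcpos.le]
      exact Real.sqrt_le_sqrt hκge
    have hnn := Real.sqrt_nonneg (sInf {r : ℝ | ∃ v ∈ Kᗮ, v ≠ 0 ∧ r = ‖D v‖ ^ 2 / ‖v‖ ^ 2})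
    linarith
  · -- degenerate case: Kᗮ = ⊥, so D = 0
    push_neg at hP
    have hbot : Kᗮ = ⊥ := by
      rw [Submodule.eq_bot_iff]
      intro x hx
      by_contra hxne
      exact hxne (hP x hx)
    have hKtop : K = ⊤ := Submodule.orthogonal_eq_bot_iff.1 hbot
    have hD0 : ∀ v : V, D v = 0 := by
      intro v
      have : v ∈ K := hKtop ▸ Submodule.mem_top
      exact LinearMap.mem_ker.1 this
    have hS1 : {r : ℝ | ∃ q ∈ LinearMap.range D, q ≠ 0 ∧
        r = sSup {s : ℝ | ∃ v : V, v ≠ 0 ∧ s = ⟪D v, q⟫ / (‖v‖ * ‖q‖)}} = ∅ := by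
      ext r
      simp only [Set.mem_setOf_eq, Set.mem_empty_iff_false, iff_false]
      rintro ⟨q, ⟨w, rfl⟩, hqne, -⟩
      exact hqne (hD0 w)
    have hS2 : {r : ℝ | ∃ v ∈ Kᗮ, v ≠ 0 ∧ r = ‖D v‖ ^ 2 / ‖v‖ ^ 2} = ∅ := by
      ext r
      simp only [Set.mem_setOf_eq, Set.mem_empty_iff_false, iff_false]
      rintro ⟨v, hvP, hvne, -⟩
      exact hvne (hP v hvP)
    rw [hS1, hS2, Real.sInf_empty]
    simp
end

section
/- Let D : V → W be a linear map between finite-dimensional inner product spaces and suppose the inf-sup constant β = inf_{0≠q∈range(D)} sup_{0≠v∈V} ⟨Dv,q⟩/(‖v‖‖q‖) is positive. Then for every q ∈ range(D) there exists v ∈ V with Dv = q and ‖v‖ ≤ β⁻¹ ‖q‖ (a bounded right inverse of D on its range). -/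
open scoped RealInnerProductSpace

theorem stmt_14
    {V W : Type*} [NormedAddCommGroup V] [InnerProductSpace ℝ V] [FiniteDimensional ℝ V]
    [NormedAddCommGroup W] [InnerProductSpace ℝ W] [FiniteDimensional ℝ W]
    (D : V →ₗ[ℝ] W) (β : ℝ)
    (hβ : β = sInf {r : ℝ | ∃ q ∈ LinearMap.range D, q ≠ 0 ∧
      r = sSup {s : ℝ | ∃ v : V, v ≠ 0 ∧ s = ⟪D v, q⟫ / (‖v‖ * ‖q‖)}})
    (hβpos : 0 < β) :
    ∀ q ∈ LinearMap.range D, ∃ v : V, D v = q ∧ ‖v‖ ≤ β⁻¹ * ‖q‖ := by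
  intro q hq
  obtain ⟨u, hu⟩ := hq
  by_cases hq0 : q = 0
  · refine ⟨0, by simp [hq0], ?_⟩
    simp [hq0]
  -- T = D* ∘ D
  set T : V →ₗ[ℝ] V := (LinearMap.adjoint D).comp D with hT
  have hkerT : LinearMap.ker T = LinearMap.ker D := by
    ext x
    simp only [LinearMap.mem_ker, hT, LinearMap.comp_apply]
    constructor
    · intro hx
      have h0 : ⟪D x, D x⟫ = 0 := by
        rw [← LinearMap.adjoint_inner_left, hx, inner_zero_left]
      exact inner_self_eq_zero.mp h0
    · intro hx; rw [hx, map_zero]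
  have hrangeT : LinearMap.range T = (LinearMap.ker D)ᗮ := by
    have hle : LinearMap.range T ≤ (LinearMap.ker D)ᗮ := by
      rintro _ ⟨x, rfl⟩
      rw [Submodule.mem_orthogonal]
      intro k hk
      have : ⟪k, T x⟫ = ⟪D k, D x⟫ := by
        simp only [hT, LinearMap.comp_apply, LinearMap.adjoint_inner_right]
      rw [this, LinearMap.mem_ker.mp hk, inner_zero_left]
    have h1 := LinearMap.finrank_range_add_finrank_ker T
    have h2 := Submodule.finrank_add_finrank_orthogonal (K := LinearMap.ker D)
    rw [hkerT] at h1
    exact Submodule.eq_of_le_of_finrank_le hle (by omega)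
  -- minimum-norm preimage v
  set K := LinearMap.ker D with hK
  set v : V := u - (Submodule.orthogonalProjectionOnto K u : V) with hv
  have hDv : D v = q := by
    have hk : ((Submodule.orthogonalProjectionOnto K u : V)) ∈ K := Submodule.coe_mem _
    simp only [hv, map_sub, hu, LinearMap.mem_ker.mp hk, sub_zero]
  have hvK : v ∈ Kᗮ := Submodule.sub_starProjection_mem_orthogonal (K := K) u
  have hvne : v ≠ 0 := by
    intro h; apply hq0; rw [← hDv, h, map_zero]
  have hvpos : (0:ℝ) < ‖v‖ := norm_pos_iff.mpr hvne
  -- get p ∈ range D with D* p = v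
  have : v ∈ LinearMap.range T := hrangeT ▸ hvK
  obtain ⟨x, hx⟩ := this
  set p : W := D x with hp
  have hDp : LinearMap.adjoint D p = v := hx
  have hpne : p ≠ 0 := by
    intro h; apply hvne; rw [← hDp, h, map_zero]
  have hppos : (0:ℝ) < ‖p‖ := norm_pos_iff.mpr hpne
  -- auxiliary facts about the sup sets
  have hbound : ∀ q' : W, q' ≠ 0 → ∀ s ∈ {s : ℝ | ∃ v' : V, v' ≠ 0 ∧
      s = ⟪D v', q'⟫ / (‖v'‖ * ‖q'‖)}, s ≤ ‖LinearMap.adjoint D q'‖ / ‖q'‖ := by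
    intro q' hq' s hs
    obtain ⟨v', hv', rfl⟩ := hs
    have hv'pos : (0:ℝ) < ‖v'‖ := norm_pos_iff.mpr hv'
    have hq'pos : (0:ℝ) < ‖q'‖ := norm_pos_iff.mpr hq'
    have h1 : ⟪D v', q'⟫ = ⟪v', LinearMap.adjoint D q'⟫ := by
      rw [LinearMap.adjoint_inner_right]
    have h2 : ⟪v', LinearMap.adjoint D q'⟫ ≤ ‖v'‖ * ‖LinearMap.adjoint D q'‖ :=
      real_inner_le_norm _ _
    rw [h1, div_le_div_iff₀ (by positivity) hq'pos]
    calc ⟪v', LinearMap.adjoint D q'⟫ * ‖q'‖ ≤ ‖v'‖ * ‖LinearMap.adjoint D q'‖ * ‖q'‖ := by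
          nlinarith
      _ = ‖LinearMap.adjoint D q'‖ * (‖v'‖ * ‖q'‖) := by ring
  have hnonneg : ∀ q' : W, q' ≠ 0 →
      0 ≤ sSup {s : ℝ | ∃ v' : V, v' ≠ 0 ∧ s = ⟪D v', q'⟫ / (‖v'‖ * ‖q'‖)} := by
    intro q' hq'
    set S := {s : ℝ | ∃ v' : V, v' ≠ 0 ∧ s = ⟪D v', q'⟫ / (‖v'‖ * ‖q'‖)} with hS
    have hbdd : BddAbove S := ⟨_, hbound q' hq'⟩
    have h1 : (⟪D v, q'⟫ / (‖v‖ * ‖q'‖)) ∈ S := ⟨v, hvne, rfl⟩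
    have h2 : (⟪D (-v), q'⟫ / (‖(-v)‖ * ‖q'‖)) ∈ S := ⟨-v, neg_ne_zero.mpr hvne, rfl⟩
    have e2 : ⟪D (-v), q'⟫ / (‖(-v)‖ * ‖q'‖) = -(⟪D v, q'⟫ / (‖v‖ * ‖q'‖)) := by
      rw [map_neg, inner_neg_left, norm_neg, neg_div]
    have l1 := le_csSup hbdd h1
    have l2 := le_csSup hbdd h2
    rw [e2] at l2
    linarith
  -- β ≤ sSup for p
  set Sp := {s : ℝ | ∃ v' : V, v' ≠ 0 ∧ s = ⟪D v', p⟫ / (‖v'‖ * ‖p‖)} with hSp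
  have hmem : sSup Sp ∈ {r : ℝ | ∃ q ∈ LinearMap.range D, q ≠ 0 ∧
      r = sSup {s : ℝ | ∃ v : V, v ≠ 0 ∧ s = ⟪D v, q⟫ / (‖v‖ * ‖q‖)}} :=
    ⟨p, ⟨x, rfl⟩, hpne, rfl⟩
  have hbddb : BddBelow {r : ℝ | ∃ q ∈ LinearMap.range D, q ≠ 0 ∧
      r = sSup {s : ℝ | ∃ v : V, v ≠ 0 ∧ s = ⟪D v, q⟫ / (‖v‖ * ‖q‖)}} := by
    refine ⟨0, ?_⟩
    rintro r ⟨q', _, hq', rfl⟩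
    exact hnonneg q' hq'
  have hβle : β ≤ sSup Sp := hβ ▸ csInf_le hbddb hmem
  -- sSup Sp ≤ ‖v‖ / ‖p‖
  have hSple : sSup Sp ≤ ‖v‖ / ‖p‖ := by
    refine csSup_le ⟨_, ⟨v, hvne, rfl⟩⟩ ?_
    intro s hs
    have := hbound p hpne s hs
    rwa [hDp] at this
  have h1 : β * ‖p‖ ≤ ‖v‖ := by
    have := hβle.trans hSple
    rw [le_div_iff₀ hppos] at this
    linarith
  -- ‖v‖² = ⟪p, q⟫ ≤ ‖p‖‖q‖
  have h2 : ‖v‖ ^ 2 ≤ ‖p‖ * ‖q‖ := by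
    have e : ‖v‖ ^ 2 = ⟪p, D v⟫ := by
      rw [← LinearMap.adjoint_inner_left, hDp, real_inner_self_eq_norm_sq]
    rw [e, hDv]
    exact real_inner_le_norm _ _
  refine ⟨v, hDv, ?_⟩
  have hβv : β * ‖v‖ ≤ ‖q‖ := by nlinarith
  rw [inv_mul_eq_div, le_div_iff₀ hβpos]
  linarith
end

section
/- Iterated penalty method convergence (abstract form): Let V be a finite-dimensional real inner product space with inner product a, D : V → W linear, and ρ > 0. Given g ∈ V, define sequences w₀ = 0 and, for ℓ ≥ 0, z_ℓ ∈ V the unique solution of a(z_ℓ, v) + ρ⟨D z_ℓ, D v⟩ = a(g, v) − ⟨D w_ℓ, D v⟩ for all v ∈ V, with w_{ℓ+1} = w_ℓ + ρ D z_ℓ... If the inf-sup constant β of D is positive, then ‖D z_ℓ‖ → 0 as ℓ → ∞ and z_ℓ converges to the a-orthogonal projection of g onto ker(D). -/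
open scoped RealInnerProductSpace
open Filter

theorem stmt_15
    {V W : Type*} [NormedAddCommGroup V] [InnerProductSpace ℝ V] [FiniteDimensional ℝ V]
    [NormedAddCommGroup W] [InnerProductSpace ℝ W] [FiniteDimensional ℝ W]
    (D : V →ₗ[ℝ] W) (ρ : ℝ) (hρ : 0 < ρ) (g : V)
    (β : ℝ)
    (hβ : β = sInf {r : ℝ | ∃ q ∈ LinearMap.range D, q ≠ 0 ∧
      r = sSup {s : ℝ | ∃ v : V, v ≠ 0 ∧ s = ⟪D v, q⟫ / (‖v‖ * ‖q‖)}})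
    (hβpos : 0 < β)
    (w : ℕ → W) (z : ℕ → V)
    (hw0 : w 0 = 0)
    (hz : ∀ ℓ : ℕ, ∀ v : V,
      ⟪z ℓ, v⟫ + ρ * ⟪D (z ℓ), D v⟫ = ⟪g, v⟫ - ⟪w ℓ, D v⟫)
    (hw : ∀ ℓ : ℕ, w (ℓ + 1) = w ℓ + ρ • D (z ℓ)) :
    Tendsto (fun ℓ => ‖D (z ℓ)‖) atTop (nhds 0) ∧
    Tendsto z atTop (nhds ((Submodule.orthogonalProjection (LinearMap.ker D) g : V))) := by
  classical
  set Dt : W →ₗ[ℝ] V := LinearMap.adjoint D with hDtdef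
  have hadj : ∀ (v : V) (q : W), ⟪D v, q⟫ = ⟪v, Dt q⟫ := by
    intro v q
    rw [hDtdef, LinearMap.adjoint_inner_right]
  -- upper bound for the sup sets
  have hub : ∀ q : W, ∀ s ∈ {s : ℝ | ∃ v : V, v ≠ 0 ∧ s = ⟪D v, q⟫ / (‖v‖ * ‖q‖)},
      s ≤ ‖Dt q‖ / ‖q‖ := by
    rintro q s ⟨v, hv, rfl⟩
    by_cases hq0 : q = 0
    · simp [hq0]
    have hvn : 0 < ‖v‖ := norm_pos_iff.mpr hv
    have hqn : 0 < ‖q‖ := norm_pos_iff.mpr hq0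
    have h1 : ⟪D v, q⟫ ≤ ‖v‖ * ‖Dt q‖ := by
      rw [hadj]; exact real_inner_le_norm _ _
    rw [div_le_div_iff₀ (by positivity) hqn]
    nlinarith
  -- key inf-sup consequence
  have hkey : ∀ q : W, q ∈ LinearMap.range D → β * ‖q‖ ≤ ‖Dt q‖ := by
    intro q hq
    by_cases hq0 : q = 0
    · simp [hq0]
    have hqn : 0 < ‖q‖ := norm_pos_iff.mpr hq0
    have hβle : β ≤ sSup {s : ℝ | ∃ v : V, v ≠ 0 ∧ s = ⟪D v, q⟫ / (‖v‖ * ‖q‖)} := by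
      rw [hβ]
      apply csInf_le
      · refine ⟨0, ?_⟩
        rintro r ⟨q', hq', hq'0, rfl⟩
        obtain ⟨v, hv⟩ := hq'
        have hq'n : 0 < ‖q'‖ := norm_pos_iff.mpr hq'0
        have hv0 : v ≠ 0 := by
          rintro rfl; simp at hv; exact hq'0 hv.symm
        have hvn : 0 < ‖v‖ := norm_pos_iff.mpr hv0
        have hmem : (⟪D v, q'⟫ / (‖v‖ * ‖q'‖)) ∈
            {s : ℝ | ∃ v : V, v ≠ 0 ∧ s = ⟪D v, q'⟫ / (‖v‖ * ‖q'‖)} := ⟨v, hv0, rfl⟩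
        have hbdd : BddAbove {s : ℝ | ∃ v : V, v ≠ 0 ∧ s = ⟪D v, q'⟫ / (‖v‖ * ‖q'‖)} :=
          ⟨‖Dt q'‖ / ‖q'‖, hub q'⟩
        have hle := le_csSup hbdd hmem
        have hpos : 0 ≤ ⟪D v, q'⟫ / (‖v‖ * ‖q'‖) := by
          rw [hv]
          have : (0:ℝ) ≤ ⟪q', q'⟫ := real_inner_self_nonneg
          positivity
        linarith
      · exact ⟨q, hq, hq0, rfl⟩
    have h2 : sSup {s : ℝ | ∃ v : V, v ≠ 0 ∧ s = ⟪D v, q⟫ / (‖v‖ * ‖q‖)} ≤ ‖Dt q‖ / ‖q‖ :=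
      Real.sSup_le (hub q) (by positivity)
    have h3 : β ≤ ‖Dt q‖ / ‖q‖ := hβle.trans h2
    rw [le_div_iff₀ hqn] at h3
    exact h3
  -- the solution formula
  have heq2 : ∀ ℓ, z ℓ = g - Dt (w (ℓ + 1)) := by
    intro ℓ
    apply ext_inner_right ℝ
    intro v
    have h := hz ℓ v
    rw [hw ℓ]
    rw [inner_sub_left, map_add, map_smul, inner_add_left, inner_smul_left, hDtdef,
      LinearMap.adjoint_inner_left, LinearMap.adjoint_inner_left]
    simp only [conj_trivial]
    linarith
  -- recursion
  have hrecV : ∀ ℓ, z (ℓ + 1) + ρ • Dt (D (z (ℓ + 1))) = z ℓ := by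
    intro ℓ
    have h1 := heq2 ℓ
    have h2 := heq2 (ℓ + 1)
    rw [hw (ℓ + 1)] at h2
    rw [map_add, map_smul] at h2
    nth_rewrite 1 [h2]
    rw [h1]
    abel
  have hrecW : ∀ ℓ, D (z (ℓ + 1)) + ρ • D (Dt (D (z (ℓ + 1)))) = D (z ℓ) := by
    intro ℓ
    have := congrArg D (hrecV ℓ)
    rwa [map_add, map_smul] at this
  -- decay
  have hdecay : ∀ ℓ, (1 + ρ * β ^ 2) * ‖D (z (ℓ + 1))‖ ≤ ‖D (z ℓ)‖ := by
    intro ℓ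
    set q1 := D (z (ℓ + 1)) with hq1
    have h := congrArg (fun x => ⟪x, q1⟫) (hrecW ℓ)
    simp only [← hq1] at h
    simp only [inner_add_left, inner_smul_left, conj_trivial] at h
    have h2 : ⟪D (Dt q1), q1⟫ = ‖Dt q1‖ ^ 2 := by
      rw [hadj, real_inner_self_eq_norm_sq]
    have h3 : β * ‖q1‖ ≤ ‖Dt q1‖ := hkey q1 ⟨z (ℓ + 1), hq1.symm⟩
    have h3sq : (β * ‖q1‖) ^ 2 ≤ ‖Dt q1‖ ^ 2 := by
      have h0 : (0:ℝ) ≤ β * ‖q1‖ := by positivity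
      nlinarith
    have h4 := real_inner_le_norm (D (z ℓ)) q1
    have h5 : ⟪q1, q1⟫ = ‖q1‖ ^ 2 := real_inner_self_eq_norm_sq q1
    rcases eq_or_lt_of_le (norm_nonneg q1) with hq0 | hq0
    · rw [← hq0, mul_zero]
      exact norm_nonneg _
    · have hmul : (1 + ρ * β ^ 2) * ‖q1‖ * ‖q1‖ ≤ ‖D (z ℓ)‖ * ‖q1‖ := by
        nlinarith
      exact (mul_le_mul_iff_left₀ hq0).mp hmul
  set r : ℝ := 1 / (1 + ρ * β ^ 2) with hrdef
  have hden : 0 < 1 + ρ * β ^ 2 := by positivity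
  have hr0 : 0 < r := by positivity
  have hr1 : r < 1 := by
    rw [hrdef, div_lt_one hden]
    have : 0 < ρ * β ^ 2 := by positivity
    linarith
  have hgeo : ∀ ℓ, ‖D (z ℓ)‖ ≤ ‖D (z 0)‖ * r ^ ℓ := by
    intro ℓ
    induction ℓ with
    | zero => simp
    | succ n ih =>
      have h := hdecay n
      have : ‖D (z (n + 1))‖ ≤ r * ‖D (z n)‖ := by
        rw [hrdef, div_mul_eq_mul_div, le_div_iff₀ hden]
        linarith
      calc ‖D (z (n + 1))‖ ≤ r * ‖D (z n)‖ := this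
        _ ≤ r * (‖D (z 0)‖ * r ^ n) := by
            exact mul_le_mul_of_nonneg_left ih hr0.le
        _ = ‖D (z 0)‖ * r ^ (n + 1) := by ring
  have htend1 : Tendsto (fun ℓ => ‖D (z ℓ)‖) atTop (nhds 0) := by
    apply squeeze_zero (fun ℓ => norm_nonneg _) hgeo
    have := (tendsto_pow_atTop_nhds_zero_of_lt_one hr0.le hr1).const_mul ‖D (z 0)‖
    simpa using this
  -- Cauchy sequence
  set Dtc : W →L[ℝ] V := LinearMap.toContinuousLinearMap Dt with hDtc
  have hDtcapp : ∀ q : W, Dtc q = Dt q := fun q => rfl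
  have hcauchy : CauchySeq z := by
    apply cauchySeq_of_le_geometric r (ρ * ‖Dtc‖ * ‖D (z 0)‖ * r) hr1
    intro n
    have hstep : z n - z (n + 1) = ρ • Dt (D (z (n + 1))) := by
      have := hrecV n
      rw [← this]; abel
    rw [dist_eq_norm, hstep, norm_smul, Real.norm_eq_abs, abs_of_pos hρ]
    have h1 : ‖Dt (D (z (n + 1)))‖ ≤ ‖Dtc‖ * ‖D (z (n + 1))‖ := by
      rw [← hDtcapp]; exact Dtc.le_opNorm _
    have h2 : ‖D (z (n + 1))‖ ≤ ‖D (z 0)‖ * r ^ (n + 1) := hgeo (n + 1)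
    have hDtcn : (0:ℝ) ≤ ‖Dtc‖ := norm_nonneg _
    calc ρ * ‖Dt (D (z (n + 1)))‖ ≤ ρ * (‖Dtc‖ * ‖D (z (n + 1))‖) := by
          exact mul_le_mul_of_nonneg_left h1 hρ.le
      _ ≤ ρ * (‖Dtc‖ * (‖D (z 0)‖ * r ^ (n + 1))) := by
          apply mul_le_mul_of_nonneg_left _ hρ.le
          exact mul_le_mul_of_nonneg_left h2 hDtcn
      _ = ρ * ‖Dtc‖ * ‖D (z 0)‖ * r * r ^ n := by ring
  obtain ⟨zlim, hzlim⟩ := cauchySeq_tendsto_of_complete hcauchy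
  -- identify the limit
  set Dc : V →L[ℝ] W := LinearMap.toContinuousLinearMap D with hDc
  have hDcapp : ∀ v : V, Dc v = D v := fun v => rfl
  have hDzlim : D zlim = 0 := by
    have h1 : Tendsto (fun ℓ => D (z ℓ)) atTop (nhds (D zlim)) := by
      have := (Dc.continuous.tendsto zlim).comp hzlim
      simpa [hDcapp, Function.comp_def] using this
    have h2 : Tendsto (fun ℓ => D (z ℓ)) atTop (nhds 0) := by
      rw [tendsto_zero_iff_norm_tendsto_zero]
      exact htend1
    exact tendsto_nhds_unique h1 h2
  have hmem : zlim ∈ LinearMap.ker D := hDzlim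
  have hortho : ∀ v ∈ LinearMap.ker D, ⟪g - zlim, v⟫ = 0 := by
    intro v hv
    have hDv : D v = 0 := hv
    have hconst : ∀ ℓ, ⟪z ℓ, v⟫ = ⟪g, v⟫ := by
      intro ℓ
      have := hz ℓ v
      rw [hDv] at this
      simpa using this
    have h1 : Tendsto (fun ℓ => ⟪z ℓ, v⟫) atTop (nhds ⟪zlim, v⟫) := by
      exact ((continuous_inner.comp (continuous_id.prodMk continuous_const)).tendsto zlim).comp hzlim
    have h2 : Tendsto (fun ℓ => ⟪z ℓ, v⟫) atTop (nhds ⟪g, v⟫) := by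
      simp only [hconst]
      exact tendsto_const_nhds
    have := tendsto_nhds_unique h1 h2
    rw [inner_sub_left, this, sub_self]
  have hproj : ((Submodule.orthogonalProjection (LinearMap.ker D) g : V)) = zlim := by
    rw [← Submodule.starProjection_apply]
    exact Submodule.eq_starProjection_of_mem_of_inner_eq_zero hmem hortho
  refine ⟨htend1, ?_⟩
  rw [hproj]
  exact hzlim
end
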